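/- Let ν, ω be natural numbers with 0 < ω ≤ ν, let σ : ℝ → ℝ be of class C², let e : [0,∞) → ℝ^ω be of class C¹, and let the constraint functions G^j be as defined in the context. For every τ ∈ [0,∞), every ξ ∈ ℝ^ν and every strictly lower triangular ν×ν real matrix M, the (ν + ν²) × ν real matrix whose (i,j) entry is ∂G^j/∂ξ^i for 0 ≤ i < ν and is the partial derivative of G^j with respect to the (i−ν)-th entry of the vectorization of M for ν ≤ i < ν + ν², has rank ν (i.e., it has full column rank). -/

import Mathlib

/-! The rows of the Jacobian belonging to `ξ` already have rank `ν`. Indeed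
`∂G^j/∂ξ^i = δ_{ij} - σ'(Σ_k m_{jk} ξ^k) m_{ji}` (without the second term for input units), and
`m_{ji} = 0` for `j ≤ i`, so this `ν × ν` block is upper triangular with unit diagonal. -/

/-- The constraint function `G^j(τ, ξ, M)` of the neural network:
`ξ^j − e^j(τ)` for input units (`j < ω`) and `ξ^j − σ(Σ_k m_{jk} ξ^k)`
for the remaining units. -/
noncomputable def G (ν ω : ℕ) (σ : ℝ → ℝ) (e : ℝ → Fin ω → ℝ)
    (τ : ℝ) (ξ : Fin ν → ℝ) (M : Fin ν → Fin ν → ℝ) (j : Fin ν) : ℝ :=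
  if h : (j : ℕ) < ω then ξ j - e τ ⟨(j : ℕ), h⟩
  else ξ j - σ (∑ k, M j k * ξ k)

theorem Matrix.rank_eq_card_of_isUpperTriangular {n R : Type*} [Fintype n] [LinearOrder n]
    [CommRing R] [IsDomain R] (A : Matrix n n R) (hA : A.IsUpperTriangular)
    (hd : ∀ i, A i i ≠ 0) :
    A.rank = Fintype.card n := by
  have h := A.rank_mul_eq_right_of_isUpperTriangular (1 : Matrix n n R) hA hd
  rwa [mul_one, rank_one] at h

theorem Matrix.rank_eq_card_width_of_submatrix {m m₀ n R : Type*} [Fintype n] [CommSemiring R]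
    [StrongRankCondition R] (A : Matrix m n R) (r : m₀ → m)
    (h : (A.submatrix r id).rank = Fintype.card n) :
    A.rank = Fintype.card n :=
  le_antisymm A.rank_le_card_width (h ▸ A.rank_submatrix_le r id)

theorem fderiv_G_apply_single {ν ω : ℕ} {σ : ℝ → ℝ} (e : ℝ → Fin ω → ℝ) (τ : ℝ)
    (ξ : Fin ν → ℝ) (M : Fin ν → Fin ν → ℝ) (i j : Fin ν)
    (hσ : DifferentiableAt ℝ σ (∑ k, M j k * ξ k)) :
    fderiv ℝ (fun ξ' => G ν ω σ e τ ξ' M j) ξ (Pi.single i 1) =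
      (Pi.single i 1 : Fin ν → ℝ) j -
        if (j : ℕ) < ω then 0 else deriv σ (∑ k, M j k * ξ k) * M j i := by
  have hproj := hasFDerivAt_apply (𝕜 := ℝ) j ξ
  by_cases hj : (j : ℕ) < ω
  · have hG : HasFDerivAt (fun ξ' => G ν ω σ e τ ξ' M j)
        (ContinuousLinearMap.proj j : (Fin ν → ℝ) →L[ℝ] ℝ) ξ := by
      simpa [G, hj] using hproj.sub_const (e τ ⟨j, hj⟩)
    simp [hG.fderiv, hj]
  · have hsum : HasFDerivAt (fun ξ' : Fin ν → ℝ => ∑ k, M j k * ξ' k)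
        (∑ k, M j k • (ContinuousLinearMap.proj k : (Fin ν → ℝ) →L[ℝ] ℝ)) ξ :=
      HasFDerivAt.fun_sum fun k _ => (hasFDerivAt_apply (𝕜 := ℝ) k ξ).const_mul (M j k)
    have hG : HasFDerivAt (fun ξ' => G ν ω σ e τ ξ' M j)
        ((ContinuousLinearMap.proj j : (Fin ν → ℝ) →L[ℝ] ℝ) - deriv σ (∑ k, M j k * ξ k) •
          ∑ k, M j k • (ContinuousLinearMap.proj k : (Fin ν → ℝ) →L[ℝ] ℝ)) ξ :=
      (hproj.sub (hσ.hasDerivAt.comp_hasFDerivAt ξ hsum)).congr_of_eventuallyEq <|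
        .of_forall fun ξ' => by simp [G, hj]
    simp [hG.fderiv, hj, Pi.single_apply]

theorem jacobian_full_rank
    (ν ω : ℕ)
    (σ : ℝ → ℝ) (hσ : ContDiff ℝ 2 σ)
    (e : ℝ → Fin ω → ℝ)
    (τ : ℝ) (ξ : Fin ν → ℝ) (M : Fin ν → Fin ν → ℝ)
    (hM : ∀ i j : Fin ν, i ≤ j → M i j = 0) :
    (Matrix.of (fun (p : Fin ν ⊕ Fin ν × Fin ν) (j : Fin ν) =>
      match p with
      | Sum.inl i =>
          fderiv ℝ (fun ξ' => G ν ω σ e τ ξ' M j) ξ (Pi.single i 1)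
      | Sum.inr (a, b) =>
          fderiv ℝ (fun M' => G ν ω σ e τ ξ M' j) M
            (Pi.single a (Pi.single b 1)))).rank = ν := by
  have hσ' : Differentiable ℝ σ := hσ.differentiable (by norm_num)
  have hpartial (i j : Fin ν) (hji : j ≤ i) :
      fderiv ℝ (fun ξ' => G ν ω σ e τ ξ' M j) ξ (Pi.single i 1) =
        (Pi.single i 1 : Fin ν → ℝ) j := by
    simp [fderiv_G_apply_single e τ ξ M i j (hσ' _), hM j i hji]
  refine (Matrix.rank_eq_card_width_of_submatrix _ Sum.inl ?_).trans (Fintype.card_fin ν)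
  refine Matrix.rank_eq_card_of_isUpperTriangular _ (fun i j hji => ?_) (fun i => ?_)
  · simpa [hpartial i j hji.le, Pi.single_apply] using hji.ne
  · simp [hpartial i i le_rfl]
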